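/- In the Markov setting, assume the submatrix (a_{ij})_{i,j∈S} is irreducible and aperiodic (primitive) and that S ≠ {1,...,m} (there is at least one hole). Then the limit γ = lim_{k→∞} −(1/k)·log Leb(Λ_k) exists and equals −log ρ(Q_1), where ρ(Q_1) is the spectral radius of the weighted transition matrix Q_1 (with β = 1) and Leb denotes Lebesgue measure; i.e., the escape rate of (Λ, F) is −log ρ(Q_1). -/

import Mathlib

open MeasureTheory Filter Topology

/-- Spectral radius of a square real matrix: the largest modulus of a
(complex) eigenvalue, i.e. of a root of the characteristic polynomial of the
complexified matrix. -/
noncomputable def specRad {n : ℕ} (M : Matrix (Fin n) (Fin n) ℝ) : ℝ :=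
  sSup {r : ℝ | ∃ μ : ℂ, (M.map (fun x => (x : ℂ))).charpoly.IsRoot μ ∧ r = ‖μ‖}

/-- Primitivity (irreducibility + aperiodicity) of a nonnegative square matrix:
some power has all entries positive. -/
def MatPrimitive {n : Type*} [Fintype n] [DecidableEq n] (M : Matrix n n ℝ) : Prop :=
  ∃ k : ℕ, 0 < k ∧ ∀ i j, 0 < (M ^ k) i j

/-- The open interval `J_j = (c_{j-1}, c_j)` of the Markov partition. -/
def Jset (m : ℕ) (c : Fin (m + 1) → ℝ) (j : Fin m) : Set ℝ :=
  Set.Ioo (c j.castSucc) (c j.succ)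

/-- The domain `D = ⋃_{j ∈ S} J_j` (the complement of the holes). -/
def Dset (m : ℕ) (c : Fin (m + 1) → ℝ) (S : Finset (Fin m)) : Set ℝ :=
  ⋃ j ∈ S, Jset m c j

/-!
Write `ν_k(i) = Leb(Λ_k ∩ J_i)`. On `J_j` the map `F` is affine with slope `s_j`, and by the
Markov property `F(J_j)` is a union of whole intervals `J_i`, so pulling back through the
branch on `J_j` gives `ν_{k+1}(j) = |s_j|⁻¹ ∑_{i : J_i ⊆ F(J_j)} ν_k(i)`, that is
`ν_{k+1} = ν_k Q_1`, and `Leb(Λ_k) = ∑_j (ν_0 Q_1^k)_j`.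

The columns of `Q_1` outside `S` vanish and, by primitivity, every column in `S` has a positive
entry in a row of `S`. Hence `Leb(Λ_k)` is bounded above and below by constant multiples of the
entry sum of `Q_1^k`, which is itself comparable with `‖Q_1^k‖`. Gelfand's formula then gives
`Leb(Λ_k)^{1/k} → ρ(Q_1)`, and the same bounds force `ρ(Q_1) > 0`, so one may take logarithms.
-/

open Finset
open scoped Matrix

theorem Real.log_rpow_of_nonneg {x : ℝ} (hx : 0 ≤ x) (y : ℝ) :
    Real.log (x ^ y) = y * Real.log x := by
  rcases hx.eq_or_lt with rfl | hx
  · rcases eq_or_ne y 0 with rfl | hy <;> simp [*]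
  · exact Real.log_rpow hx y

theorem tendsto_const_rpow_one_div_nat {C : ℝ} (hC : 0 < C) :
    Tendsto (fun k : ℕ => C ^ (1 / k : ℝ)) atTop (𝓝 1) := by
  have := (Real.continuousAt_const_rpow (b := 0) hC.ne').tendsto.comp
    (tendsto_one_div_atTop_nhds_zero_nat (𝕜 := ℝ))
  rwa [Real.rpow_zero] at this

theorem tendsto_rpow_one_div_of_le_mul_of_le_mul {a g : ℕ → ℝ} {r c C : ℝ}
    (hc : 0 < c) (hC : 0 < C) (ha : ∀ k, 0 ≤ a k)
    (hlim : Tendsto (fun k => a k ^ (1 / k : ℝ)) atTop (𝓝 r))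
    (hlow : ∀ᶠ k in atTop, c * a k ≤ g k) (hup : ∀ᶠ k in atTop, g k ≤ C * a k) :
    Tendsto (fun k => g k ^ (1 / k : ℝ)) atTop (𝓝 r) := by
  have hbound : ∀ {b : ℝ}, 0 < b →
      Tendsto (fun k : ℕ => (b * a k) ^ (1 / k : ℝ)) atTop (𝓝 r) := fun {b} hb => by
    simpa [Real.mul_rpow hb.le (ha _)] using (tendsto_const_rpow_one_div_nat hb).mul hlim
  refine tendsto_of_tendsto_of_tendsto_of_le_of_le' (hbound hc) (hbound hC) ?_ ?_
  · filter_upwards [hlow] with k hk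
    exact Real.rpow_le_rpow (by have := ha k; positivity) hk (by positivity)
  · filter_upwards [hlow, hup] with k hk hk'
    exact Real.rpow_le_rpow ((mul_nonneg hc.le (ha k)).trans hk) hk' (by positivity)

theorem tendsto_one_div_mul_log_of_tendsto_rpow {g : ℕ → ℝ} {r : ℝ} (hg : ∀ k, 0 ≤ g k)
    (hr : r ≠ 0) (h : Tendsto (fun k => g k ^ (1 / k : ℝ)) atTop (𝓝 r)) :
    Tendsto (fun k : ℕ => (1 / k : ℝ) * Real.log (g k)) atTop (𝓝 (Real.log r)) := by
  simpa only [Function.comp_def, Real.log_rpow_of_nonneg (hg _)] using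
    (Real.continuousAt_log hr).tendsto.comp h

theorem spectrum.tendsto_norm_pow_rpow_toReal_spectralRadius {A : Type*} [NormedRing A]
    [NormedAlgebra ℂ A] [CompleteSpace A] [NormOneClass A] (a : A) :
    Tendsto (fun k : ℕ => ‖a ^ k‖ ^ (1 / k : ℝ)) atTop (𝓝 (spectralRadius ℂ a).toReal) := by
  have hfin : spectralRadius ℂ a ≠ ⊤ :=
    ne_top_of_le_ne_top ENNReal.coe_ne_top (spectrum.spectralRadius_le_nnnorm a)
  have := (ENNReal.tendsto_toReal hfin).comp
    (spectrum.pow_norm_pow_one_div_tendsto_nhds_spectralRadius a)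
  simpa [Function.comp_def, ENNReal.toReal_ofReal, Real.rpow_nonneg] using this

section LinftyNorm

-- `spectralRadius` does not depend on the norm; the `ℓ∞` operator norm is just a convenient
-- Banach-algebra norm in which to apply Gelfand's formula.
attribute [local instance] Matrix.linftyOpSeminormedAddCommGroup Matrix.linftyOpNormedRing
  Matrix.linftyOpNormedAlgebra

variable {ι κ α : Type*} [Fintype ι] [Fintype κ] [SeminormedAddCommGroup α]

theorem Matrix.linfty_opNorm_le_sum_norm (B : Matrix ι κ α) : ‖B‖ ≤ ∑ i, ∑ j, ‖B i j‖ := by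
  have : (univ.sup fun i => ∑ j, ‖B i j‖₊) ≤ ∑ i, ∑ j, ‖B i j‖₊ :=
    Finset.sup_le fun i _ =>
      single_le_sum (f := fun i => ∑ j, ‖B i j‖₊) (fun _ _ => zero_le) (mem_univ i)
  simpa [Matrix.linfty_opNorm_def, NNReal.coe_sum] using NNReal.coe_le_coe.mpr this

theorem Matrix.sum_norm_le_card_mul_linfty_opNorm (B : Matrix ι κ α) :
    ∑ i, ∑ j, ‖B i j‖ ≤ Fintype.card ι * ‖B‖ := by
  rw [Matrix.linfty_opNorm_def, ← nsmul_eq_mul, ← card_univ]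
  refine sum_le_card_nsmul _ _ _ fun i _ => ?_
  simpa [NNReal.coe_sum] using NNReal.coe_le_coe.mpr
    (Finset.le_sup (f := fun i => ∑ j, ‖B i j‖₊) (mem_univ i))

theorem Matrix.tendsto_sum_norm_pow_rpow_spectralRadius [DecidableEq ι] [Nonempty ι]
    (B : Matrix ι ι ℂ) :
    Tendsto (fun k : ℕ => (∑ i, ∑ j, ‖(B ^ k) i j‖) ^ (1 / k : ℝ)) atTop
      (𝓝 (spectralRadius ℂ B).toReal) :=
  tendsto_rpow_one_div_of_le_mul_of_le_mul one_pos (Nat.cast_pos.mpr Fintype.card_pos)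
    (fun _ => norm_nonneg _)
    (spectrum.tendsto_norm_pow_rpow_toReal_spectralRadius B)
    (.of_forall fun k => by simpa using Matrix.linfty_opNorm_le_sum_norm (B ^ k))
    (.of_forall fun k => Matrix.sum_norm_le_card_mul_linfty_opNorm (B ^ k))

theorem specRad_eq_toReal_spectralRadius {n : ℕ} [NeZero n] (M : Matrix (Fin n) (Fin n) ℝ) :
    specRad M = (spectralRadius ℂ (M.map (fun x : ℝ => (x : ℂ)))).toReal := by
  obtain ⟨μ₀, hμ₀, hrad⟩ := spectrum.exists_nnnorm_eq_spectralRadius (M.map (fun x : ℝ => (x : ℂ)))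
  rw [← hrad, ENNReal.coe_toReal, coe_nnnorm]
  refine IsGreatest.csSup_eq ⟨⟨μ₀, Matrix.mem_spectrum_iff_isRoot_charpoly.mp hμ₀, rfl⟩, ?_⟩
  rintro _ ⟨μ, hμ, rfl⟩
  have : (‖μ‖₊ : ENNReal) ≤ ‖μ₀‖₊ :=
    hrad ▸ le_iSup₂ (f := fun μ (_ : μ ∈ spectrum ℂ _) => (‖μ‖₊ : ENNReal)) μ
      (Matrix.mem_spectrum_iff_isRoot_charpoly.mpr hμ)
  exact_mod_cast this

end LinftyNorm

theorem specRad_zero {n : ℕ} : specRad (0 : Matrix (Fin n) (Fin n) ℝ) = 0 := by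
  refine le_antisymm (Real.sSup_nonpos ?_) (Real.sSup_nonneg ?_) <;> rintro _ ⟨μ, hμ, rfl⟩
  · simp only [Matrix.map_zero _ Complex.ofReal_zero, Matrix.charpoly_zero, Polynomial.IsRoot.def,
      Polynomial.eval_pow, Polynomial.eval_X] at hμ
    simp [pow_eq_zero_iff'.mp hμ |>.1]
  · exact norm_nonneg μ

theorem MatPrimitive.exists_apply_ne_zero {ι : Type*} [Fintype ι] [DecidableEq ι]
    {M : Matrix ι ι ℝ} (hM : MatPrimitive M) (j : ι) : ∃ i, M i j ≠ 0 := by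
  obtain ⟨k, hk, hpos⟩ := hM
  by_contra! hcol
  obtain ⟨k, rfl⟩ := Nat.exists_eq_succ_of_ne_zero hk.ne'
  simpa [pow_succ, Matrix.mul_apply, hcol] using (hpos j j).ne'

namespace Matrix

variable {ι : Type*} {Q : Matrix ι ι ℝ} {S : Finset ι}

theorem exists_pos_le_sum_col (hQ : ∀ i j, 0 ≤ Q i j) (hcol : ∀ j ∈ S, ∃ i ∈ S, 0 < Q i j)
    (hS : S.Nonempty) : ∃ q, 0 < q ∧ ∀ j ∈ S, q ≤ ∑ i ∈ S, Q i j := by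
  obtain ⟨j₀, hj₀, hmin⟩ := S.exists_min_image (fun j => ∑ i ∈ S, Q i j) hS
  obtain ⟨i₀, hi₀, hpos⟩ := hcol j₀ hj₀
  exact ⟨_, sum_pos' (fun i _ => hQ i j₀) ⟨i₀, hi₀, hpos⟩, hmin⟩

variable [Fintype ι]

theorem sum_apply_vecMul (v : ι → ℝ) (M : Matrix ι ι ℝ) :
    ∑ j, (v ᵥ* M) j = ∑ i, v i * ∑ j, M i j := by
  simp only [vecMul, dotProduct, mul_sum]
  exact sum_comm

variable [DecidableEq ι]

theorem sum_sum_pow_succ (hQS : ∀ i j, j ∉ S → Q i j = 0) (U : Finset ι) (k : ℕ) :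
    ∑ i ∈ U, ∑ j, (Q ^ (k + 1)) i j = ∑ l ∈ S, (∑ i ∈ U, Q i l) * ∑ j, (Q ^ k) l j := by
  have hS : ∑ l ∈ S, (∑ i ∈ U, Q i l) * ∑ j, (Q ^ k) l j
      = ∑ l, (∑ i ∈ U, Q i l) * ∑ j, (Q ^ k) l j :=
    sum_subset S.subset_univ fun l _ hl => by simp [hQS _ l hl]
  calc ∑ i ∈ U, ∑ j, (Q ^ (k + 1)) i j = ∑ i ∈ U, ∑ l, Q i l * ∑ j, (Q ^ k) l j :=
        sum_congr rfl fun i _ => by simp only [pow_succ', mul_apply, mul_sum]; exact sum_comm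
    _ = _ := by rw [hS]; simp only [sum_mul]; exact sum_comm

theorem mul_sum_pow_le_sum_pow_succ (hQ : ∀ i j, 0 ≤ Q i j) (hQS : ∀ i j, j ∉ S → Q i j = 0)
    {q : ℝ} (hq : ∀ j ∈ S, q ≤ ∑ i ∈ S, Q i j) (k : ℕ) :
    q * ∑ i ∈ S, ∑ j, (Q ^ k) i j ≤ ∑ i ∈ S, ∑ j, (Q ^ (k + 1)) i j := by
  rw [sum_sum_pow_succ hQS, mul_sum]
  exact sum_le_sum fun l hl => mul_le_mul_of_nonneg_right (hq l hl)
    (sum_nonneg fun j _ => pow_apply_nonneg hQ k l j)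

theorem sum_pow_succ_le_mul_sum_pow (hQ : ∀ i j, 0 ≤ Q i j) (hQS : ∀ i j, j ∉ S → Q i j = 0)
    (k : ℕ) :
    ∑ i, ∑ j, (Q ^ (k + 1)) i j ≤ (∑ i, ∑ j, Q i j) * ∑ i ∈ S, ∑ j, (Q ^ k) i j := by
  rw [sum_sum_pow_succ hQS, mul_sum]
  refine sum_le_sum fun l _ => mul_le_mul_of_nonneg_right ?_
    (sum_nonneg fun j _ => pow_apply_nonneg hQ k l j)
  exact sum_le_sum fun i _ => single_le_sum (fun j _ => hQ i j) (mem_univ l)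

theorem pow_mul_card_le_sum_pow (hQ : ∀ i j, 0 ≤ Q i j) (hQS : ∀ i j, j ∉ S → Q i j = 0)
    {q : ℝ} (hq0 : 0 ≤ q) (hq : ∀ j ∈ S, q ≤ ∑ i ∈ S, Q i j) (k : ℕ) :
    q ^ k * #S ≤ ∑ i ∈ S, ∑ j, (Q ^ k) i j := by
  induction k with
  | zero => simp [one_apply]
  | succ k ih =>
    calc q ^ (k + 1) * #S = q * (q ^ k * #S) := by ring
      _ ≤ q * ∑ i ∈ S, ∑ j, (Q ^ k) i j := mul_le_mul_of_nonneg_left ih hq0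
      _ ≤ _ := mul_sum_pow_le_sum_pow_succ hQ hQS hq k

theorem mul_sum_pow_le_mul_sum_pow (hQ : ∀ i j, 0 ≤ Q i j) (hQS : ∀ i j, j ∉ S → Q i j = 0)
    {q : ℝ} (hq0 : 0 ≤ q) (hq : ∀ j ∈ S, q ≤ ∑ i ∈ S, Q i j) {k : ℕ} (hk : k ≠ 0) :
    q * ∑ i, ∑ j, (Q ^ k) i j ≤ (∑ i, ∑ j, Q i j) * ∑ i ∈ S, ∑ j, (Q ^ k) i j := by
  obtain ⟨k, rfl⟩ := Nat.exists_eq_succ_of_ne_zero hk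
  calc q * ∑ i, ∑ j, (Q ^ (k + 1)) i j
      ≤ q * ((∑ i, ∑ j, Q i j) * ∑ i ∈ S, ∑ j, (Q ^ k) i j) :=
        mul_le_mul_of_nonneg_left (sum_pow_succ_le_mul_sum_pow hQ hQS k) hq0
    _ = (∑ i, ∑ j, Q i j) * (q * ∑ i ∈ S, ∑ j, (Q ^ k) i j) := by ring
    _ ≤ _ := mul_le_mul_of_nonneg_left (mul_sum_pow_le_sum_pow_succ hQ hQS hq k)
        (sum_nonneg fun i _ => sum_nonneg fun j _ => hQ i j)

end Matrix

section SpecRad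

variable {n : ℕ} [NeZero n] {Q : Matrix (Fin n) (Fin n) ℝ} {S : Finset (Fin n)}

theorem tendsto_sum_pow_rpow_specRad (hQ : ∀ i j, 0 ≤ Q i j) :
    Tendsto (fun k : ℕ => (∑ i, ∑ j, (Q ^ k) i j) ^ (1 / k : ℝ)) atTop (𝓝 (specRad Q)) := by
  have hentry : ∀ k i j, ‖((Q.map (fun x : ℝ => (x : ℂ))) ^ k) i j‖ = (Q ^ k) i j := fun k i j => by
    have hmap : (Q.map fun x : ℝ => (x : ℂ)) ^ k = (Q ^ k).map (fun x : ℝ => (x : ℂ)) :=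
      (Matrix.map_pow Q Complex.ofRealHom k).symm
    simp [hmap, abs_of_nonneg (Matrix.pow_apply_nonneg hQ k i j)]
  rw [specRad_eq_toReal_spectralRadius]
  simpa only [hentry] using
    Matrix.tendsto_sum_norm_pow_rpow_spectralRadius (Q.map (fun x : ℝ => (x : ℂ)))

theorem specRad_pos (hQ : ∀ i j, 0 ≤ Q i j) (hQS : ∀ i j, j ∉ S → Q i j = 0)
    (hcol : ∀ j ∈ S, ∃ i ∈ S, 0 < Q i j) (hS : S.Nonempty) : 0 < specRad Q := by
  obtain ⟨q, hq0, hq⟩ := Matrix.exists_pos_le_sum_col hQ hcol hS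
  refine hq0.trans_le (ge_of_tendsto (tendsto_sum_pow_rpow_specRad hQ) ?_)
  filter_upwards [eventually_ne_atTop 0] with k hk
  have hpow : q ^ k ≤ ∑ i, ∑ j, (Q ^ k) i j := calc
    q ^ k ≤ q ^ k * #S := le_mul_of_one_le_right (by positivity) (by exact_mod_cast hS.card_pos)
    _ ≤ ∑ i ∈ S, ∑ j, (Q ^ k) i j := Matrix.pow_mul_card_le_sum_pow hQ hQS hq0.le hq k
    _ ≤ ∑ i, ∑ j, (Q ^ k) i j := sum_le_sum_of_subset_of_nonneg S.subset_univ fun i _ _ =>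
        sum_nonneg fun j _ => Matrix.pow_apply_nonneg hQ k i j
  calc q = (q ^ k) ^ (1 / k : ℝ) := by
        rw [← Real.rpow_natCast, ← Real.rpow_mul hq0.le, mul_one_div_cancel (by exact_mod_cast hk),
          Real.rpow_one]
    _ ≤ _ := Real.rpow_le_rpow (by positivity) hpow (by positivity)

theorem tendsto_sum_vecMul_pow_rpow_specRad (hQ : ∀ i j, 0 ≤ Q i j)
    (hQS : ∀ i j, j ∉ S → Q i j = 0) (hcol : ∀ j ∈ S, ∃ i ∈ S, 0 < Q i j) (hS : S.Nonempty)
    {v : Fin n → ℝ} (hv : ∀ i, 0 ≤ v i) (hvS : ∀ i ∈ S, 0 < v i) :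
    Tendsto (fun k : ℕ => (∑ j, (v ᵥ* Q ^ k) j) ^ (1 / k : ℝ)) atTop (𝓝 (specRad Q)) := by
  obtain ⟨q, hq0, hq⟩ := Matrix.exists_pos_le_sum_col hQ hcol hS
  obtain ⟨i₀, hi₀, hvmin⟩ := S.exists_min_image v hS
  have hrow : ∀ k i, 0 ≤ ∑ j, (Q ^ k) i j := fun k i =>
    sum_nonneg fun j _ => Matrix.pow_apply_nonneg hQ k i j
  have hC : 0 < ∑ i, ∑ j, Q i j := by
    obtain ⟨j, hj⟩ := hS
    calc 0 < q := hq0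
      _ ≤ ∑ i ∈ S, Q i j := hq j hj
      _ ≤ ∑ i, Q i j := sum_le_sum_of_subset_of_nonneg S.subset_univ fun i _ _ => hQ i j
      _ ≤ ∑ i, ∑ j, Q i j := sum_le_sum fun i _ => single_le_sum (fun j _ => hQ i j) (mem_univ j)
  refine tendsto_rpow_one_div_of_le_mul_of_le_mul (c := v i₀ * q / ∑ i, ∑ j, Q i j)
    (C := ∑ i, v i) (by have := hvS i₀ hi₀; positivity)
    ((hvS i₀ hi₀).trans_le (single_le_sum (fun i _ => hv i) (mem_univ i₀)))
    (fun k => sum_nonneg fun i _ => hrow k i) (tendsto_sum_pow_rpow_specRad hQ) ?_ ?_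
  · filter_upwards [eventually_ne_atTop 0] with k hk
    rw [Matrix.sum_apply_vecMul]
    calc v i₀ * q / (∑ i, ∑ j, Q i j) * ∑ i, ∑ j, (Q ^ k) i j
        ≤ v i₀ * ∑ i ∈ S, ∑ j, (Q ^ k) i j := by
          rw [div_mul_eq_mul_div, div_le_iff₀ hC, mul_assoc, mul_assoc,
            mul_comm _ (∑ i, ∑ j, Q i j)]
          exact mul_le_mul_of_nonneg_left
            (Matrix.mul_sum_pow_le_mul_sum_pow hQ hQS hq0.le hq hk) (hv i₀)
      _ ≤ ∑ i ∈ S, v i * ∑ j, (Q ^ k) i j := by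
          rw [mul_sum]
          exact sum_le_sum fun i hi => mul_le_mul_of_nonneg_right (hvmin i hi) (hrow k i)
      _ ≤ ∑ i, v i * ∑ j, (Q ^ k) i j := sum_le_sum_of_subset_of_nonneg S.subset_univ
          fun i _ _ => mul_nonneg (hv i) (hrow k i)
  · refine .of_forall fun k => ?_
    rw [Matrix.sum_apply_vecMul, mul_sum]
    exact sum_le_sum fun i _ =>
      mul_le_mul_of_nonneg_right (single_le_sum (fun i _ => hv i) (mem_univ i)) (hrow k i)

end SpecRad

theorem Real.volume_preimage_mul_add {a : ℝ} (ha : a ≠ 0) (b : ℝ) (E : Set ℝ) :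
    volume ((fun x => a * x + b) ⁻¹' E) = ENNReal.ofReal |a⁻¹| * volume E := by
  have hcomp : (fun x : ℝ => a * x + b) = (· + b) ∘ (a * ·) := rfl
  rw [hcomp, Set.preimage_comp, Real.volume_preimage_mul_left ha, measure_preimage_add_right]

def Λset (m : ℕ) (c : Fin (m + 1) → ℝ) (S : Finset (Fin m)) (F : ℝ → ℝ) (k : ℕ) : Set ℝ :=
  {x | ∀ j ≤ k, F^[j] x ∈ Dset m c S}

section Markov

variable {m : ℕ} {c : Fin (m + 1) → ℝ} {S : Finset (Fin m)} {F : ℝ → ℝ}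

theorem Jset_nonempty (hmono : StrictMono c) (i : Fin m) : (Jset m c i).Nonempty :=
  Set.nonempty_Ioo.mpr (hmono Fin.castSucc_lt_succ)

theorem measurableSet_Jset (i : Fin m) : MeasurableSet (Jset m c i) :=
  measurableSet_Ioo

theorem volume_Jset_lt_top (i : Fin m) : volume (Jset m c i) < ⊤ :=
  measure_Ioo_lt_top

theorem pairwise_disjoint_Jset (hmono : StrictMono c) :
    Pairwise (Function.onFun Disjoint (Jset m c)) := by
  intro i j hij
  wlog h : i < j generalizing i j
  · exact (this hij.symm (lt_of_le_of_ne (not_lt.mp h) hij.symm)).symm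
  exact Set.Ioo_disjoint_Ioo.mpr
    (le_max_of_le_right (min_le_of_left_le (hmono.monotone (Fin.succ_le_castSucc_iff.mpr h))))

theorem mem_Dset {x : ℝ} : x ∈ Dset m c S ↔ ∃ i ∈ S, x ∈ Jset m c i := by
  simp [Dset]

theorem Jset_subset_Dset {j : Fin m} (hj : j ∈ S) : Jset m c j ⊆ Dset m c S :=
  fun _ hx => mem_Dset.mpr ⟨j, hj, hx⟩

theorem disjoint_Dset_Jset (hmono : StrictMono c) {i : Fin m} (hi : i ∉ S) :
    Disjoint (Dset m c S) (Jset m c i) := by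
  refine Set.disjoint_left.mpr fun x hx hxi => ?_
  obtain ⟨j, hj, hxj⟩ := mem_Dset.mp hx
  exact Set.disjoint_left.mp (pairwise_disjoint_Jset hmono (ne_of_mem_of_not_mem hj hi)) hxj hxi

theorem Λset_zero : Λset m c S F 0 = Dset m c S := by
  simp [Λset]

theorem Λset_succ (k : ℕ) : Λset m c S F (k + 1) = Dset m c S ∩ F ⁻¹' Λset m c S F k := by
  ext x
  refine ⟨fun h => ⟨h 0 (Nat.zero_le _), fun j hj => h (j + 1) (by omega)⟩, ?_⟩
  rintro ⟨h0, h⟩ (_ | j) hj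
  exacts [h0, h j (by omega)]

theorem Λset_subset_Dset (k : ℕ) : Λset m c S F k ⊆ Dset m c S :=
  fun _ hx => hx 0 k.zero_le

theorem Λset_empty (k : ℕ) : Λset m c ∅ F k = ∅ :=
  Set.subset_empty_iff.mp ((Λset_subset_Dset k).trans (by simp [Dset]))

theorem toReal_volume_eq_sum_inter_Jset (hmono : StrictMono c) {E : Set ℝ}
    (hE : E ⊆ Dset m c S) : (volume E).toReal = ∑ i, (volume (E ∩ Jset m c i)).toReal := by
  have hcover : E ⊆ ⋃ i, Jset m c i :=
    hE.trans (Set.iUnion₂_subset fun i _ => Set.subset_iUnion (Jset m c) i)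
  rw [← Measure.restrict_eq_self volume hcover,
    Measure.restrict_iUnion (pairwise_disjoint_Jset hmono) measurableSet_Jset,
    Measure.sum_fintype, Measure.coe_finsetSum, Finset.sum_apply]
  simp only [Measure.restrict_apply' (measurableSet_Jset _)]
  exact ENNReal.toReal_sum fun i _ =>
    ((measure_mono Set.inter_subset_right).trans_lt (volume_Jset_lt_top i)).ne

variable {s t : Fin m → ℝ}

theorem volume_Λset_succ_inter_Jset
    (hF : ∀ j ∈ S, ∀ x ∈ Jset m c j, F x = s j * x + t j) {j : Fin m} (hj : j ∈ S)
    (hsj : s j ≠ 0) (k : ℕ) :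
    volume (Λset m c S F (k + 1) ∩ Jset m c j)
      = ENNReal.ofReal |s j|⁻¹ * volume (F '' Jset m c j ∩ Λset m c S F k) := by
  set φ : ℝ → ℝ := fun x => s j * x + t j
  have hφ : Function.Injective φ := fun x y h => mul_left_cancel₀ hsj (add_right_cancel h)
  have hset : Λset m c S F (k + 1) ∩ Jset m c j = φ ⁻¹' (F '' Jset m c j ∩ Λset m c S F k) := by
    have himage : F '' Jset m c j = φ '' Jset m c j := Set.image_congr (hF j hj)
    ext x
    rw [himage]
    simp only [Λset_succ, Set.mem_inter_iff, Set.mem_preimage, hφ.mem_set_image]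
    constructor
    · rintro ⟨⟨_, hFx⟩, hx⟩
      exact ⟨hx, by rwa [hF j hj x hx] at hFx⟩
    · rintro ⟨hx, hφx⟩
      exact ⟨⟨Jset_subset_Dset hj hx, by rwa [hF j hj x hx]⟩, hx⟩
  rw [hset, Real.volume_preimage_mul_add hsj, abs_inv]

variable {A : Matrix (Fin m) (Fin m) ℝ}

theorem toReal_volume_image_inter_Λset_inter_Jset (hmono : StrictMono c)
    (hMarkov : ∀ i : Fin m, ∀ j ∈ S,
      Jset m c i ⊆ F '' Jset m c j ∨ F '' Jset m c j ∩ Jset m c i = ∅)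
    (hA1 : ∀ i : Fin m, ∀ j ∈ S, Jset m c i ⊆ F '' Jset m c j → A i j = 1)
    (hA0 : ∀ i j : Fin m, ¬(j ∈ S ∧ Jset m c i ⊆ F '' Jset m c j) → A i j = 0)
    {j : Fin m} (hj : j ∈ S) (k : ℕ) (i : Fin m) :
    (volume (F '' Jset m c j ∩ Λset m c S F k ∩ Jset m c i)).toReal
      = A i j * (volume (Λset m c S F k ∩ Jset m c i)).toReal := by
  rcases hMarkov i j hj with hsub | hdisj
  · rw [hA1 i j hj hsub, one_mul, Set.inter_assoc,
      Set.inter_eq_right.mpr (Set.inter_subset_right.trans hsub)]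
  · have hJi : ¬Jset m c i ⊆ F '' Jset m c j := fun hsub =>
      (Jset_nonempty hmono i).not_subset_empty (hdisj ▸ Set.subset_inter hsub subset_rfl)
    rw [hA0 i j fun h => hJi h.2, zero_mul, Set.inter_right_comm, hdisj, Set.empty_inter,
      measure_empty, ENNReal.toReal_zero]

theorem toReal_volume_Λset_succ_inter_Jset (hmono : StrictMono c) (hs : ∀ j ∈ S, s j ≠ 0)
    (hF : ∀ j ∈ S, ∀ x ∈ Jset m c j, F x = s j * x + t j)
    (hMarkov : ∀ i : Fin m, ∀ j ∈ S,
      Jset m c i ⊆ F '' Jset m c j ∨ F '' Jset m c j ∩ Jset m c i = ∅)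
    (hA1 : ∀ i : Fin m, ∀ j ∈ S, Jset m c i ⊆ F '' Jset m c j → A i j = 1)
    (hA0 : ∀ i j : Fin m, ¬(j ∈ S ∧ Jset m c i ⊆ F '' Jset m c j) → A i j = 0)
    (k : ℕ) (j : Fin m) :
    (volume (Λset m c S F (k + 1) ∩ Jset m c j)).toReal
      = ∑ i, (volume (Λset m c S F k ∩ Jset m c i)).toReal * (A i j * |s j|⁻¹) := by
  by_cases hj : j ∈ S
  · rw [volume_Λset_succ_inter_Jset hF hj (hs j hj), ENNReal.toReal_mul,
      ENNReal.toReal_ofReal (by positivity), toReal_volume_eq_sum_inter_Jset hmono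
        (Set.inter_subset_right.trans (Λset_subset_Dset k)), mul_sum]
    refine sum_congr rfl fun i _ => ?_
    rw [toReal_volume_image_inter_Λset_inter_Jset hmono hMarkov hA1 hA0 hj]
    ring
  · have hempty : Λset m c S F (k + 1) ∩ Jset m c j = ∅ := Set.disjoint_iff_inter_eq_empty.mp
      ((disjoint_Dset_Jset hmono hj).mono_left (Λset_subset_Dset _))
    simp [hempty, hA0 _ j fun h => hj h.1]

theorem toReal_volume_Λset_eq_sum_vecMul_pow (hmono : StrictMono c) (hs : ∀ j ∈ S, s j ≠ 0)
    (hF : ∀ j ∈ S, ∀ x ∈ Jset m c j, F x = s j * x + t j)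
    (hMarkov : ∀ i : Fin m, ∀ j ∈ S,
      Jset m c i ⊆ F '' Jset m c j ∨ F '' Jset m c j ∩ Jset m c i = ∅)
    (hA1 : ∀ i : Fin m, ∀ j ∈ S, Jset m c i ⊆ F '' Jset m c j → A i j = 1)
    (hA0 : ∀ i j : Fin m, ¬(j ∈ S ∧ Jset m c i ⊆ F '' Jset m c j) → A i j = 0) (k : ℕ) :
    (volume (Λset m c S F k)).toReal
      = ∑ j, ((fun i => (volume (Dset m c S ∩ Jset m c i)).toReal) ᵥ*
          (Matrix.of fun i j => A i j * |s j|⁻¹) ^ k) j := by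
  have hmass : ∀ k, (fun i => (volume (Λset m c S F k ∩ Jset m c i)).toReal)
      = (fun i => (volume (Dset m c S ∩ Jset m c i)).toReal) ᵥ*
          (Matrix.of fun i j => A i j * |s j|⁻¹) ^ k := by
    intro k
    induction k with
    | zero => simp [Λset_zero]
    | succ k ih =>
      funext j
      rw [pow_succ, ← Matrix.vecMul_vecMul, ← ih]
      exact toReal_volume_Λset_succ_inter_Jset hmono hs hF hMarkov hA1 hA0 k j
  rw [toReal_volume_eq_sum_inter_Jset hmono (Λset_subset_Dset k), ← hmass]

theorem toReal_volume_Dset_inter_Jset_pos (hmono : StrictMono c) {i : Fin m} (hi : i ∈ S) :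
    0 < (volume (Dset m c S ∩ Jset m c i)).toReal := by
  rw [Set.inter_eq_right.mpr (Jset_subset_Dset hi), Jset, Real.volume_Ioo,
    ENNReal.toReal_ofReal (sub_nonneg.mpr (hmono Fin.castSucc_lt_succ).le)]
  exact sub_pos.mpr (hmono Fin.castSucc_lt_succ)

end Markov

theorem escape_rate_eq_neg_log_spectralRadius_general
    (m : ℕ) (c : Fin (m + 1) → ℝ)
    (hmono : StrictMono c)
    (S : Finset (Fin m)) (s t : Fin m → ℝ) (F : ℝ → ℝ)
    (hs : ∀ j ∈ S, 1 < |s j|)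
    (hF : ∀ j ∈ S, ∀ x ∈ Jset m c j, F x = s j * x + t j)
    (hMarkov : ∀ i : Fin m, ∀ j ∈ S,
      Jset m c i ⊆ F '' Jset m c j ∨ F '' Jset m c j ∩ Jset m c i = ∅)
    (A : Matrix (Fin m) (Fin m) ℝ)
    (hA1 : ∀ i : Fin m, ∀ j ∈ S, Jset m c i ⊆ F '' Jset m c j → A i j = 1)
    (hA0 : ∀ i j : Fin m, ¬(j ∈ S ∧ Jset m c i ⊆ F '' Jset m c j) → A i j = 0)
    (Q : ℝ → Matrix (Fin m) (Fin m) ℝ)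
    (hQ : ∀ β i j, Q β i j = A i j * |s j| ^ (-β))
    (hprim : MatPrimitive
      (A.submatrix (fun i : {x // x ∈ S} => (i : Fin m)) (fun j : {x // x ∈ S} => (j : Fin m)))) :
    Tendsto
      (fun k : ℕ =>
        -((1 : ℝ) / k) * Real.log ((volume {x : ℝ | ∀ j ≤ k, F^[j] x ∈ Dset m c S}).toReal))
      atTop (𝓝 (-Real.log (specRad (Q 1)))) := by
  show Tendsto (fun k : ℕ => -((1 : ℝ) / k) * Real.log (volume (Λset m c S F k)).toReal) _ _
  have hQ1 : Q 1 = Matrix.of fun i j => A i j * |s j|⁻¹ := by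
    ext i j
    simp [hQ, Real.rpow_neg_one]
  rcases S.eq_empty_or_nonempty with rfl | hS
  · -- `Λ_k = ∅` and `Q 1 = 0`, and both sides vanish because `Real.log 0 = 0`.
    have hQ0 : Q 1 = 0 := by
      ext i j
      simp [hQ1, hA0 i j]
    simp [Λset_empty, hQ0, specRad_zero]
  have : NeZero m := NeZero.of_pos (Fin.pos hS.choose)
  have hpos : ∀ i j, A i j ≠ 0 → 0 < Q 1 i j := fun i j h => by
    obtain ⟨hj, hsub⟩ := not_not.mp (mt (hA0 i j) h)
    simp [hQ1, hA1 i j hj hsub, zero_lt_one.trans (hs j hj)]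
  have hQnn : ∀ i j, 0 ≤ Q 1 i j := fun i j => by
    by_cases h : A i j = 0
    exacts [by simp [hQ1, h], (hpos i j h).le]
  have hQS : ∀ i j, j ∉ S → Q 1 i j = 0 := fun i j hj => by simp [hQ1, hA0 i j fun h => hj h.1]
  have hcol : ∀ j ∈ S, ∃ i ∈ S, 0 < Q 1 i j := fun j hj => by
    obtain ⟨i, hi⟩ := hprim.exists_apply_ne_zero ⟨j, hj⟩
    exact ⟨i, i.2, hpos i j hi⟩
  have hlim := tendsto_sum_vecMul_pow_rpow_specRad hQnn hQS hcol hS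
    (fun _ => ENNReal.toReal_nonneg) fun i hi => toReal_volume_Dset_inter_Jset_pos hmono hi
  have hvol := toReal_volume_Λset_eq_sum_vecMul_pow hmono
    (fun j hj => abs_pos.mp (zero_lt_one.trans (hs j hj))) hF hMarkov hA1 hA0
  simp only [← hQ1] at hvol
  simp only [← hvol] at hlim
  exact (tendsto_one_div_mul_log_of_tendsto_rpow (fun _ => ENNReal.toReal_nonneg)
    (specRad_pos hQnn hQS hcol hS).ne' hlim).neg.congr fun k => (neg_mul _ _).symm

/-- **Theorem 3(ii).** In the Markov setting, if the submatrix of `A` over `S`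
is primitive and there is at least one hole, then the escape rate
`γ = lim_{k→∞} -(1/k) log Leb(Λ_k)` exists and equals `-log ρ(Q_1)`. -/
theorem escape_rate_eq_neg_log_spectralRadius
    (m : ℕ) (hm : 0 < m) (c : Fin (m + 1) → ℝ)
    (hc0 : c 0 = 0) (hc1 : c (Fin.last m) = 1) (hmono : StrictMono c)
    (S : Finset (Fin m)) (s t : Fin m → ℝ) (F : ℝ → ℝ)
    (hs : ∀ j ∈ S, 1 < |s j|)
    (hF : ∀ j ∈ S, ∀ x ∈ Jset m c j, F x = s j * x + t j)
    (hMarkov : ∀ i : Fin m, ∀ j ∈ S,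
      Jset m c i ⊆ F '' Jset m c j ∨ F '' Jset m c j ∩ Jset m c i = ∅)
    (A : Matrix (Fin m) (Fin m) ℝ)
    (hA1 : ∀ i : Fin m, ∀ j ∈ S, Jset m c i ⊆ F '' Jset m c j → A i j = 1)
    (hA0 : ∀ i j : Fin m, ¬(j ∈ S ∧ Jset m c i ⊆ F '' Jset m c j) → A i j = 0)
    (Q : ℝ → Matrix (Fin m) (Fin m) ℝ)
    (hQ : ∀ β i j, Q β i j = A i j * |s j| ^ (-β))
    (hprim : MatPrimitive
      (A.submatrix (fun i : {x // x ∈ S} => (i : Fin m)) (fun j : {x // x ∈ S} => (j : Fin m))))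
    (hhole : S ≠ Finset.univ) :
    Tendsto
      (fun k : ℕ =>
        -((1 : ℝ) / k) * Real.log ((volume {x : ℝ | ∀ j ≤ k, F^[j] x ∈ Dset m c S}).toReal))
      atTop (𝓝 (-Real.log (specRad (Q 1)))) :=
  escape_rate_eq_neg_log_spectralRadius_general m c hmono S s t F hs hF hMarkov A hA1 hA0 Q hQ hprim
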